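/- For f ∈ L¹_loc(X) and 1 ≤ p < ∞, define F_f(η) = (1/‖η‖)∫ f dη for η ∈ 𝓧. Then f ∈ L^p(X,μ) if and only if ‖F_f‖_{𝓛^p(𝓧)} < ∞, and in that case ‖F_f‖_{𝓛^p(𝓧)} = ‖f‖_{L^p(X,μ)}. -/

import Mathlib

open MeasureTheory Set Filter
open scoped ENNReal Classical

variable {X : Type*} [MetricSpace X] [MeasurableSpace X]

/-- Total mass of a measure, as a real number. -/
noncomputable def mass (ν : Measure X) : ℝ := (ν Set.univ).toReal

/-- The support of a measure. -/
def msupp (ν : Measure X) : Set X := {x : X | ∀ ε : ℝ, 0 < ε → 0 < ν (Metric.ball x ε)}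

/-- The set `𝓜` of measures dominated by `μ` with compact support. -/
def MM (μ : Measure X) : Set (Measure X) := {ν | ν ≤ μ ∧ IsCompact (msupp ν)}

/-- Gauge function `h` used in the definition of the mass transport metric. -/
def IsGauge (h : ℝ → ℝ) : Prop :=
  StrictMonoOn h (Set.Ici 0) ∧ ContinuousOn h (Set.Ici 0) ∧ h 0 = 0 ∧
  Tendsto (fun ε => h ε / ε) (nhdsWithin 0 (Set.Ioi 0)) (nhds 0) ∧
  (∀ a b : ℝ, 0 ≤ a → 0 ≤ b → h a + h b ≤ h (a + b)) ∧
  Tendsto h atTop atTop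

/-- `Γ_{ε,δ}(ν,η) ≠ ∅`: existence of a countable mass-transport decomposition. -/
def GammaDecomp (μ : Measure X) (ε δ : ℝ) (ν η : Measure X) : Prop :=
  ∃ νi ηi : ℕ → Measure X,
    (∀ i, νi i ∈ MM μ) ∧ (∀ i, ηi i ∈ MM μ) ∧
    ν = Measure.sum νi ∧ η = Measure.sum ηi ∧
    (∃ S : ℝ, HasSum (fun i => |mass (νi i) - mass (ηi i)|) S ∧ S ≤ δ) ∧
    (∀ i, Metric.diam (msupp (νi i) ∪ msupp (ηi i)) ≤ ε)

/-- The mass transport metric `d_𝓜`. -/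
noncomputable def dM (h : ℝ → ℝ) (μ : Measure X) (ν η : Measure X) : ℝ :=
  sInf {ε : ℝ | 0 < ε ∧ GammaDecomp μ ε (h ε) ν η}

/-- A rectifiable curve in `𝓜` subparametrized by arc-length: a `1`-Lipschitz map
`[0,b] → (𝓜, d_𝓜)`. -/
def IsCurveM (h : ℝ → ℝ) (μ : Measure X) (b : ℝ) (γ : ℝ → Measure X) : Prop :=
  0 ≤ b ∧ (∀ t ∈ Icc (0:ℝ) b, γ t ∈ MM μ) ∧
  ∀ s ∈ Icc (0:ℝ) b, ∀ t ∈ Icc (0:ℝ) b, dM h μ (γ s) (γ t) ≤ |s - t|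

/-- A rectifiable curve in `𝓧 = 𝓜 \ {0}` subparametrized by arc-length. -/
def IsCurveX (h : ℝ → ℝ) (μ : Measure X) (b : ℝ) (γ : ℝ → Measure X) : Prop :=
  IsCurveM h μ b γ ∧ ∀ t ∈ Icc (0:ℝ) b, γ t ≠ 0

/-- The mean value functional `F_f(η) = (1/‖η‖) ∫ f dη`. -/
noncomputable def FfM (f : X → ℝ) (η : Measure X) : ℝ := (∫ x, f x ∂η) / mass η

/-- `r_F^ε(η)`. -/
noncomputable def rGradE (h : ℝ → ℝ) (μ : Measure X) (F : Measure X → ℝ) (ε : ℝ)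
    (η : Measure X) : ℝ≥0∞ :=
  sSup {r : ℝ≥0∞ | ∃ (b : ℝ) (γ : ℝ → Measure X) (s : ℝ),
    IsCurveX h μ b γ ∧ γ 0 = η ∧ 0 < s ∧ s < ε ∧ s < b ∧
    r = ENNReal.ofReal (|F (γ s) - F η| / s)}

/-- The upper gradient `r_F(η) = lim_{ε→0} r_F^ε(η)`. -/
noncomputable def rGrad (h : ℝ → ℝ) (μ : Measure X) (F : Measure X → ℝ)
    (η : Measure X) : ℝ≥0∞ :=
  ⨅ (ε : ℝ) (_ : 0 < ε), rGradE h μ F ε η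

/-- Upper semicontinuous regularization along curves of `g : 𝓧 → [0,∞]`. -/
noncomputable def breveG (h : ℝ → ℝ) (μ : Measure X) (g : Measure X → ℝ≥0∞)
    (η : Measure X) : ℝ≥0∞ :=
  ⨅ (s : ℝ) (_ : 0 < s), sSup {r : ℝ≥0∞ | ∃ (b : ℝ) (γ : ℝ → Measure X) (t : ℝ),
    IsCurveX h μ b γ ∧ γ 0 = η ∧ 0 ≤ t ∧ t < s ∧ t ≤ b ∧ r = g (γ t)}

/-- `sup { Σᵢ G(ηᵢ)^p ‖ηᵢ‖ }` over finite disjointly supported families in `𝓧`. -/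
noncomputable def LpPow (μ : Measure X) (p : ℝ) (G : Measure X → ℝ≥0∞) : ℝ≥0∞ :=
  sSup {r : ℝ≥0∞ | ∃ (k : ℕ) (η : Fin k → Measure X),
    (∀ i, η i ∈ MM μ ∧ η i ≠ 0) ∧
    (∀ i j, i ≠ j → Disjoint (msupp (η i)) (msupp (η j))) ∧
    r = ∑ i, (G (η i)) ^ p * (η i) Set.univ}

/-- The `𝓛^p(𝓧)` norm of `F : 𝓧 → ℝ`. -/
noncomputable def LpNorm (μ : Measure X) (p : ℝ) (F : Measure X → ℝ) : ℝ≥0∞ :=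
  (LpPow μ p (fun η => ENNReal.ofReal |F η|)) ^ (1 / p)

/-- The `𝓛^p(𝓧)` norm for an extended exponent `p ∈ [1,∞]`. -/
noncomputable def LpNormE (μ : Measure X) (p : ℝ≥0∞) (F : Measure X → ℝ) : ℝ≥0∞ :=
  if p = ∞ then ⨆ (η : Measure X) (_ : η ∈ MM μ ∧ η ≠ 0), ENNReal.ofReal |F η|
  else LpNorm μ p.toReal F

/-! For `η ∈ 𝓧`, Jensen's inequality gives `|F_f(η)|^p ‖η‖ ≤ ∫ |f|^p dη ≤ ∫_{supp η} |f|^p dμ`,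
so disjointly supported `ηᵢ` contribute at most `∫ |f|^p dμ`. Conversely, cut `X` into the level
sets `{f ∈ [jδ, (j+1)δ)}` and restrict `μ` to disjoint compact subsets of them (inner regularity):
on each piece `|F_f|` is at least the distance from `0` to `[jδ, (j+1)δ]`, so the sums defining
`𝓛^p` dominate the integral of a step function which tends to `|f|^p` as `δ → 0` (Fatou). -/

open scoped Topology

theorem ENNReal.finsetSum_iSup_le_iSup_sum {α : Type*} {β : α → Type*} [∀ a, Nonempty (β a)]
    (s : Finset α) (f : ∀ a, β a → ℝ≥0∞) :
    ∑ a ∈ s, ⨆ b, f a b ≤ ⨆ g : ∀ a, β a, ∑ a ∈ s, f a (g a) := by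
  classical
  induction s using Finset.induction_on with
  | empty => simp
  | insert a s ha ih =>
    rw [Finset.sum_insert ha]
    calc (⨆ b, f a b) + ∑ a ∈ s, ⨆ b, f a b
        ≤ (⨆ b, f a b) + ⨆ g : ∀ a, β a, ∑ a ∈ s, f a (g a) := by gcongr
      _ ≤ _ := ENNReal.iSup_add_iSup_le fun b g => le_iSup_of_le (Function.update g a b) <| by
          rw [Finset.sum_insert ha, Function.update_self]
          gcongr with x hx
          rw [Function.update_of_ne (ne_of_mem_of_not_mem hx ha)]

theorem enorm_average_rpow_mul_measure_univ_le {α E : Type*} [MeasurableSpace α]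
    [NormedAddCommGroup E] [NormedSpace ℝ E] {ν : Measure α} [IsFiniteMeasure ν] {p : ℝ}
    (hp : 1 ≤ p) {f : α → E} (hf : AEStronglyMeasurable f ν) :
    ‖⨍ x, f x ∂ν‖ₑ ^ p * ν univ ≤ ∫⁻ x, ‖f x‖ₑ ^ p ∂ν := by
  rcases eq_zero_or_neZero ν with rfl | hν
  · simp
  have hp0 : 0 < p := zero_lt_one.trans_le hp
  have hν0 : ν univ ≠ 0 := (Measure.measure_univ_ne_zero).2 hν.out
  have h1 : ‖⨍ x, f x ∂ν‖ₑ ≤ eLpNorm f (ENNReal.ofReal p) ((ν univ)⁻¹ • ν) :=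
    calc ‖⨍ x, f x ∂ν‖ₑ ≤ eLpNorm f 1 ((ν univ)⁻¹ • ν) := by
          rw [average_eq', eLpNorm_one_eq_lintegral_enorm]
          exact enorm_integral_le_lintegral_enorm f
      _ ≤ eLpNorm f (ENNReal.ofReal p) ((ν univ)⁻¹ • ν) :=
          eLpNorm_le_eLpNorm_of_exponent_le (ENNReal.one_le_ofReal.2 hp)
            (hf.mono_ac Measure.smul_absolutelyContinuous)
  have h2 : eLpNorm f (ENNReal.ofReal p) ((ν univ)⁻¹ • ν) ^ p
      = (ν univ)⁻¹ * ∫⁻ x, ‖f x‖ₑ ^ p ∂ν := by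
    rw [eLpNorm_eq_lintegral_rpow_enorm_toReal (by simpa using hp0) ENNReal.ofReal_ne_top,
      ENNReal.toReal_ofReal hp0.le, ← ENNReal.rpow_mul, one_div_mul_cancel hp0.ne',
      ENNReal.rpow_one, lintegral_smul_measure, smul_eq_mul]
  calc ‖⨍ x, f x ∂ν‖ₑ ^ p * ν univ
      ≤ eLpNorm f (ENNReal.ofReal p) ((ν univ)⁻¹ • ν) ^ p * ν univ := by gcongr
    _ = ∫⁻ x, ‖f x‖ₑ ^ p ∂ν := by
      rw [h2, mul_comm, ← mul_assoc, ENNReal.mul_inv_cancel hν0 (measure_ne_top ν univ), one_mul]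

theorem average_mem_Icc {α : Type*} [MeasurableSpace α] {ν : Measure α} [IsFiniteMeasure ν]
    [NeZero ν] {f : α → ℝ} (hf : AEStronglyMeasurable f ν) {a b : ℝ}
    (hab : ∀ᵐ x ∂ν, f x ∈ Icc a b) : ⨍ x, f x ∂ν ∈ Icc a b :=
  (convex_Icc a b).average_mem isClosed_Icc hab <|
    .of_bound hf (max |a| |b|) (hab.mono fun _ hx => abs_le_max_abs_abs hx.1 hx.2)

theorem FfM_eq_average {α : Type*} [MeasurableSpace α] (f : α → ℝ) (ν : Measure α) :
    FfM f ν = ⨍ x, f x ∂ν := by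
  rw [FfM, average_eq, smul_eq_mul, mass, ← measureReal_def, div_eq_inv_mul]

def gridCell (δ : ℝ) (j : ℤ) : Set ℝ := Icc (j * δ) ((j + 1) * δ)

theorem mem_gridCell_floor {δ : ℝ} (hδ : 0 < δ) (t : ℝ) : t ∈ gridCell δ ⌊t / δ⌋ :=
  ⟨(le_div_iff₀ hδ).1 (Int.floor_le _), ((div_lt_iff₀ hδ).1 (Int.lt_floor_add_one _)).le⟩

theorem abs_le_infDist_gridCell_add {δ : ℝ} (hδ : 0 ≤ δ) {j : ℤ} {t : ℝ} (ht : t ∈ gridCell δ j) :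
    |t| ≤ Metric.infDist 0 (gridCell δ j) + δ := by
  have hdiam : Metric.diam (gridCell δ j) = δ := by
    rw [gridCell, Real.diam_Icc (by nlinarith)]
    ring
  have h : dist 0 t ≤ Metric.infDist 0 (gridCell δ j) + Metric.diam (gridCell δ j) :=
    Metric.dist_le_infDist_add_diam (Metric.isBounded_Icc _ _) ht
  rwa [hdiam, dist_zero_left, Real.norm_eq_abs] at h

theorem tendsto_infDist_gridCell_floor {δ : ℕ → ℝ} (hδ : ∀ n, 0 < δ n)
    (hδ0 : Tendsto δ atTop (𝓝 0)) (t : ℝ) :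
    Tendsto (fun n => Metric.infDist 0 (gridCell (δ n) ⌊t / δ n⌋)) atTop (𝓝 |t|) := by
  refine tendsto_of_tendsto_of_tendsto_of_le_of_le (by simpa using tendsto_const_nhds.sub hδ0)
    tendsto_const_nhds (fun n => ?_) fun n => ?_
  · linarith [abs_le_infDist_gridCell_add (hδ n).le (mem_gridCell_floor (hδ n) t)]
  · simpa using Metric.infDist_le_dist_of_mem (x := 0) (mem_gridCell_floor (hδ n) t)

section

variable {μ : Measure X} {p : ℝ}

theorem msupp_eq_support (ν : Measure X) : msupp ν = ν.support := by
  ext x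
  exact Metric.nhds_basis_ball.mem_measureSupport.symm

theorem isClosed_msupp (ν : Measure X) : IsClosed (msupp ν) :=
  msupp_eq_support ν ▸ Measure.isClosed_support

theorem msupp_restrict_subset [OpensMeasurableSpace X] {K : Set X} (hK : IsClosed K) :
    msupp (μ.restrict K) ⊆ K := by
  rw [msupp_eq_support]
  exact Measure.support_restrict_subset.trans (inter_subset_left.trans hK.closure_subset)

theorem le_restrict_msupp [HereditarilyLindelofSpace X] {ν : Measure X} (h : ν ≤ μ) :
    ν ≤ μ.restrict (msupp ν) :=
  calc ν = ν.restrict (msupp ν) :=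
        (Measure.restrict_eq_self_of_ae_mem (msupp_eq_support ν ▸ Measure.support_mem_ae)).symm
    _ ≤ μ.restrict (msupp ν) := Measure.restrict_mono subset_rfl h

theorem isFiniteMeasure_of_mem_MM [HereditarilyLindelofSpace X] [IsFiniteMeasureOnCompacts μ]
    {ν : Measure X} (hν : ν ∈ MM μ) : IsFiniteMeasure ν :=
  ⟨calc ν univ ≤ μ.restrict (msupp ν) univ := le_restrict_msupp hν.1 univ
    _ = μ (msupp ν) := Measure.restrict_apply_univ _
    _ < ∞ := hν.2.measure_lt_top⟩

theorem restrict_mem_MM [OpensMeasurableSpace X] {K : Set X} (hK : IsCompact K) :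
    μ.restrict K ∈ MM μ :=
  ⟨Measure.restrict_le_self,
    hK.of_isClosed_subset (isClosed_msupp _) (msupp_restrict_subset hK.isClosed)⟩

theorem LpPow_FfM_le_lintegral [OpensMeasurableSpace X] [HereditarilyLindelofSpace X]
    [IsFiniteMeasureOnCompacts μ] (hp : 1 ≤ p) {f : X → ℝ} (hf : AEStronglyMeasurable f μ) :
    LpPow μ p (fun η => ENNReal.ofReal |FfM f η|) ≤ ∫⁻ x, ‖f x‖ₑ ^ p ∂μ := by
  refine sSup_le ?_
  rintro _ ⟨k, η, hη, hdisj, rfl⟩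
  calc ∑ i, ENNReal.ofReal |FfM f (η i)| ^ p * η i univ ≤ ∑ i, ∫⁻ x, ‖f x‖ₑ ^ p ∂η i := by
        gcongr with i
        have := isFiniteMeasure_of_mem_MM (hη i).1
        rw [FfM_eq_average, ← Real.enorm_eq_ofReal_abs]
        exact enorm_average_rpow_mul_measure_univ_le hp (hf.mono_measure (hη i).1.1)
    _ ≤ ∑ i, ∫⁻ x in msupp (η i), ‖f x‖ₑ ^ p ∂μ := by
        gcongr with i
        exact le_restrict_msupp (hη i).1.1
    _ = ∫⁻ x in ⋃ i, msupp (η i), ‖f x‖ₑ ^ p ∂μ := by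
        rw [lintegral_iUnion (fun i => (isClosed_msupp _).measurableSet) hdisj, tsum_fintype]
    _ ≤ ∫⁻ x, ‖f x‖ₑ ^ p ∂μ := setLIntegral_le_lintegral _ _

theorem sum_le_LpPow {ι : Type*} (G : Measure X → ℝ≥0∞) (s : Finset ι) {η : ι → Measure X}
    (hη : ∀ i ∈ s, η i ∈ MM μ ∧ η i ≠ 0) (hdisj : (s : Set ι).PairwiseDisjoint (msupp ∘ η)) :
    ∑ i ∈ s, G (η i) ^ p * η i univ ≤ LpPow μ p G := by
  set e := s.equivFin.symm
  refine le_sSup ⟨s.card, fun k => η (e k), fun k => hη _ (e k).2,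
    fun k l hkl => hdisj (e k).2 (e l).2 ?_, ?_⟩
  · exact fun h => hkl (e.injective (Subtype.ext h))
  · rw [← s.sum_coe_sort]
    exact (e.sum_comp fun i => G (η i) ^ p * η i univ).symm

theorem sum_restrict_le_LpPow [OpensMeasurableSpace X] (hp : 0 ≤ p) (G : Measure X → ℝ≥0∞)
    {ι : Type*} (s : Finset ι) {K : ι → Set X} (hK : ∀ i ∈ s, IsCompact (K i))
    (hdisj : (s : Set ι).PairwiseDisjoint K) {c : ι → ℝ≥0∞}
    (hc : ∀ i ∈ s, μ (K i) ≠ 0 → c i ≤ G (μ.restrict (K i))) :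
    ∑ i ∈ s, c i ^ p * μ (K i) ≤ LpPow μ p G := by
  classical
  calc ∑ i ∈ s, c i ^ p * μ (K i) = ∑ i ∈ s with μ (K i) ≠ 0, c i ^ p * μ (K i) :=
        (Finset.sum_filter_of_ne fun _ _ h => right_ne_zero_of_mul h).symm
    _ ≤ ∑ i ∈ s with μ (K i) ≠ 0, G (μ.restrict (K i)) ^ p * μ.restrict (K i) univ := by
        refine Finset.sum_le_sum fun i hi => ?_
        rw [Finset.mem_filter] at hi
        rw [Measure.restrict_apply_univ]
        gcongr
        exact hc i hi.1 hi.2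
    _ ≤ LpPow μ p G := by
        refine sum_le_LpPow G _ (fun i hi => ?_) ((hdisj.subset (Finset.filter_subset _ s)).mono_on
          fun i hi => msupp_restrict_subset (hK i (Finset.mem_filter.1 hi).1).isClosed)
        rw [Finset.mem_filter] at hi
        exact ⟨restrict_mem_MM (hK i hi.1), by rw [Ne, Measure.restrict_eq_zero]; exact hi.2⟩

theorem lintegral_comp_le_LpPow [OpensMeasurableSpace X] [μ.InnerRegular] (hp : 0 ≤ p)
    (G : Measure X → ℝ≥0∞) {ι : Type*} [Countable ι] [MeasurableSpace ι]
    [DiscreteMeasurableSpace ι] {q : X → ι} (hq : Measurable q) {c : ι → ℝ≥0∞}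
    (hc : ∀ i K, IsCompact K → K ⊆ q ⁻¹' {i} → μ K ≠ 0 → c i ≤ G (μ.restrict K)) :
    ∫⁻ x, c (q x) ^ p ∂μ ≤ LpPow μ p G := by
  have : ∀ i, Nonempty {K // K ⊆ q ⁻¹' {i} ∧ IsCompact K} :=
    fun i => ⟨⟨∅, empty_subset _, isCompact_empty⟩⟩
  rw [← lintegral_map (f := fun i => c i ^ p) .of_discrete hq, lintegral_countable',
    ENNReal.tsum_eq_iSup_sum]
  refine iSup_le fun s => ?_
  calc ∑ i ∈ s, c i ^ p * μ.map q {i}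
      = ∑ i ∈ s, ⨆ K : {K // K ⊆ q ⁻¹' {i} ∧ IsCompact K}, c i ^ p * μ K := by
        refine Finset.sum_congr rfl fun i _ => ?_
        rw [Measure.map_apply hq (measurableSet_singleton i),
          (hq (measurableSet_singleton i)).measure_eq_iSup_isCompact]
        simp only [ENNReal.mul_iSup, iSup_subtype, iSup_and]
    _ ≤ ⨆ K : ∀ i, {K // K ⊆ q ⁻¹' {i} ∧ IsCompact K}, ∑ i ∈ s, c i ^ p * μ (K i) :=
        ENNReal.finsetSum_iSup_le_iSup_sum s _
    _ ≤ LpPow μ p G := iSup_le fun K => sum_restrict_le_LpPow hp G s (fun i _ => (K i).2.2)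
        (((pairwiseDisjoint_fiber q univ).subset (subset_univ _)).mono_on fun i _ => (K i).2.1)
        fun i _ => hc i _ (K i).2.2 (K i).2.1

theorem lintegral_le_LpPow_FfM [OpensMeasurableSpace X] [IsFiniteMeasureOnCompacts μ]
    [μ.InnerRegular] (hp : 0 ≤ p) {f : X → ℝ} (hf : AEStronglyMeasurable f μ) :
    ∫⁻ x, ‖f x‖ₑ ^ p ∂μ ≤ LpPow μ p (fun η => ENNReal.ofReal |FfM f η|) := by
  obtain ⟨f', hf'm, hff'⟩ := hf
  set δ : ℕ → ℝ := fun n => 1 / (n + 1)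
  have hδ n : 0 < δ n := Nat.one_div_pos_of_nat
  have hq n : Measurable fun x => ⌊f' x / δ n⌋ := (hf'm.measurable.div_const _).floor
  set c : ℕ → ℤ → ℝ≥0∞ := fun n j => ENNReal.ofReal (Metric.infDist 0 (gridCell (δ n) j))
  set g : ℕ → X → ℝ≥0∞ := fun n x => c n ⌊f' x / δ n⌋ ^ p
  have hg_le n : ∫⁻ x, g n x ∂μ ≤ LpPow μ p (fun η => ENNReal.ofReal |FfM f η|) := by
    refine lintegral_comp_le_LpPow hp _ (hq n) (c := c n) fun j K hK hKj hK0 => ?_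
    have : IsFiniteMeasure (μ.restrict K) := isFiniteMeasure_restrict.2 hK.measure_lt_top.ne
    have : NeZero (μ.restrict K) := ⟨by rwa [Ne, Measure.restrict_eq_zero]⟩
    have hmem : ∀ᵐ x ∂μ.restrict K, f x ∈ gridCell (δ n) j := by
      filter_upwards [ae_restrict_of_ae hff', ae_restrict_mem hK.measurableSet] with x hx hxK
      rw [hx, ← hKj hxK]
      exact mem_gridCell_floor (hδ n) _
    have hF : FfM f (μ.restrict K) ∈ gridCell (δ n) j := by
      rw [FfM_eq_average]
      exact average_mem_Icc ⟨f', hf'm, ae_restrict_of_ae hff'⟩ hmem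
    exact ENNReal.ofReal_le_ofReal (by simpa using Metric.infDist_le_dist_of_mem (x := (0 : ℝ)) hF)
  have hg_tendsto x : Tendsto (fun n => g n x) atTop (𝓝 (‖f' x‖ₑ ^ p)) := by
    rw [Real.enorm_eq_ofReal_abs]
    exact (ENNReal.continuous_rpow_const.tendsto _).comp <| ENNReal.tendsto_ofReal <|
      tendsto_infDist_gridCell_floor hδ tendsto_one_div_add_atTop_nhds_zero_nat _
  calc ∫⁻ x, ‖f x‖ₑ ^ p ∂μ = ∫⁻ x, ‖f' x‖ₑ ^ p ∂μ :=
        lintegral_congr_ae (hff'.mono fun x hx => by simp only [hx])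
    _ = ∫⁻ x, liminf (fun n => g n x) atTop ∂μ :=
        lintegral_congr fun x => (hg_tendsto x).liminf_eq.symm
    _ ≤ liminf (fun n => ∫⁻ x, g n x ∂μ) atTop :=
        lintegral_liminf_le fun n => (Measurable.of_discrete (f := fun j => c n j ^ p)).comp (hq n)
    _ ≤ _ := liminf_le_of_frequently_le' (Frequently.of_forall hg_le)

theorem LpPow_FfM_eq_lintegral [OpensMeasurableSpace X] [HereditarilyLindelofSpace X]
    [IsFiniteMeasureOnCompacts μ] [μ.InnerRegular] (hp : 1 ≤ p) {f : X → ℝ}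
    (hf : AEStronglyMeasurable f μ) :
    LpPow μ p (fun η => ENNReal.ofReal |FfM f η|) = ∫⁻ x, ‖f x‖ₑ ^ p ∂μ :=
  (LpPow_FfM_le_lintegral hp hf).antisymm (lintegral_le_LpPow_FfM (zero_le_one.trans hp) hf)

end

theorem stmt13_general {X : Type*} [MetricSpace X] [MeasurableSpace X] [BorelSpace X]
    [LocallyCompactSpace X] [TopologicalSpace.SeparableSpace X]
    (μ : Measure X) [μ.Regular]
    (p : ℝ) (hp : 1 ≤ p) (f : X → ℝ) (hf : LocallyIntegrable f μ) :
    (MemLp f (ENNReal.ofReal p) μ ↔ LpNorm μ p (FfM f) < ⊤) ∧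
    LpNorm μ p (FfM f) = eLpNorm f (ENNReal.ofReal p) μ := by
  have : SecondCountableTopology X := UniformSpace.secondCountable_of_separable X
  have hp0 : 0 < p := zero_lt_one.trans_le hp
  have hnorm : LpNorm μ p (FfM f) = eLpNorm f (ENNReal.ofReal p) μ := by
    rw [LpNorm, LpPow_FfM_eq_lintegral hp hf.aestronglyMeasurable,
      eLpNorm_eq_lintegral_rpow_enorm_toReal (by simpa using hp0) ENNReal.ofReal_ne_top,
      ENNReal.toReal_ofReal hp0.le]
  exact ⟨⟨fun h => hnorm ▸ h.eLpNorm_lt_top, fun h => ⟨hf.aestronglyMeasurable, hnorm ▸ h⟩⟩,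
    hnorm⟩

/-- For `f ∈ L¹_loc(X)`: `f ∈ L^p(X)` iff `F_f ∈ 𝓛^p(𝓧)`, and the
norms agree. -/
theorem stmt13 {X : Type*} [MetricSpace X] [MeasurableSpace X] [BorelSpace X]
    [LocallyCompactSpace X] [TopologicalSpace.SeparableSpace X]
    (μ : Measure X) [μ.Regular]
    (hμ : ∀ (x : X) (r : ℝ), 0 < r → 0 < μ (Metric.ball x r) ∧ μ (Metric.ball x r) < ⊤)
    (p : ℝ) (hp : 1 ≤ p) (f : X → ℝ) (hf : LocallyIntegrable f μ) :
    (MemLp f (ENNReal.ofReal p) μ ↔ LpNorm μ p (FfM f) < ⊤) ∧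
    LpNorm μ p (FfM f) = eLpNorm f (ENNReal.ofReal p) μ :=
  stmt13_general μ p hp f hf
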